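/- Let H ∈ (0,1/2]. For every real t, ∫₀² χ(u/2) · Δ²₁G_H(t−u) du = −∫₀¹ Δ³₁G_H(t−u−1) du = −δ⁴₁𝒢_H(t). -/

import Mathlib

open Real MeasureTheory Set

/-- The normalizing constant `K_H = Γ(H+1/2)/√(sin(πH)·Γ(2H+1))`. -/
noncomputable def KH (H : ℝ) : ℝ :=
  Real.Gamma (H + 1/2) / Real.sqrt (Real.sin (Real.pi * H) * Real.Gamma (2*H + 1))

/-- `G_H(t) = K_H⁻¹ (H+1/2)⁻¹ t^{H+1/2}` for `t > 0`, and `0` for `t ≤ 0`. -/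
noncomputable def GH (H : ℝ) (t : ℝ) : ℝ :=
  if 0 < t then (KH H)⁻¹ * (H + 1/2)⁻¹ * t ^ (H + 1/2) else 0

/-- `𝒢_H(t) = K_H⁻¹ ((H+1/2)(H+3/2))⁻¹ t^{H+3/2}` for `t > 0`, and `0` for `t ≤ 0`. -/
noncomputable def calGH (H : ℝ) (t : ℝ) : ℝ :=
  if 0 < t then (KH H)⁻¹ * ((H + 1/2) * (H + 3/2))⁻¹ * t ^ (H + 3/2) else 0

/-- Second-order forward difference with unit step. -/
noncomputable def Δ2 (f : ℝ → ℝ) (t : ℝ) : ℝ := f (t + 2) - 2 * f (t + 1) + f t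

/-- Third-order forward difference with unit step. -/
noncomputable def Δ3 (f : ℝ → ℝ) (t : ℝ) : ℝ :=
  f (t + 3) - 3 * f (t + 2) + 3 * f (t + 1) - f t

/-- Fourth-order central difference with unit step. -/
noncomputable def δ4 (f : ℝ → ℝ) (t : ℝ) : ℝ :=
  f (t + 2) - 4 * f (t + 1) + 6 * f t - 4 * f (t - 1) + f (t - 2)

/-- `χ(t) = −1` for `t ∈ [0,1/2]` and `χ(t) = 1` for `t ∈ (1/2,1]`. -/
noncomputable def chi (t : ℝ) : ℝ := if t ≤ 1/2 then -1 else 1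

lemma KH_nonneg (H : ℝ) (hH : 0 < H) : 0 ≤ KH H := by
  unfold KH
  have := Real.Gamma_pos_of_pos (show (0:ℝ) < H + 1/2 by linarith)
  positivity

lemma GH_monotone (H : ℝ) (hH : 0 < H) : Monotone (GH H) := by
  intro s u hsu
  unfold GH
  have hc : 0 ≤ (KH H)⁻¹ * (H + 1/2)⁻¹ := by
    have := KH_nonneg H hH; positivity
  split_ifs with h1 h2 h2
  · exact mul_le_mul_of_nonneg_left
      (Real.rpow_le_rpow h1.le hsu (by linarith)) hc
  · linarith
  · have : (0:ℝ) < u ^ (H + 1/2) := Real.rpow_pos_of_pos h2 _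
    positivity
  · exact le_refl 0

lemma calGH_hasDerivAt (H : ℝ) (hH : 0 < H) (x : ℝ) :
    HasDerivAt (calGH H) (GH H x) x := by
  set c : ℝ := (KH H)⁻¹ * ((H + 1/2) * (H + 3/2))⁻¹ with hc_def
  have hc : 0 ≤ c := by
    have := KH_nonneg H hH
    have h1 : (0:ℝ) < H + 1/2 := by linarith
    have h2 : (0:ℝ) < H + 3/2 := by linarith
    positivity
  have h12 : (0:ℝ) < H + 1/2 := by linarith
  have h32 : (H:ℝ) + 3/2 ≠ 0 := by linarith
  rcases lt_trichotomy x 0 with hx | hx | hx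
  · have h0 : GH H x = 0 := by simp [GH, not_lt.mpr hx.le]
    rw [h0]
    refine (hasDerivAt_const x (0:ℝ)).congr_of_eventuallyEq ?_
    filter_upwards [Iio_mem_nhds hx] with y hy
    have : ¬ (0:ℝ) < y := not_lt.mpr (mem_Iio.mp hy).le
    simp [calGH, this]
  · subst hx
    have h0 : GH H 0 = 0 := by simp [GH]
    rw [h0, hasDerivAt_iff_tendsto_slope]
    have hslope : ∀ u : ℝ, slope (calGH H) 0 u = if 0 < u then c * u ^ (H + 1/2) else 0 := by
      intro u
      rw [slope_def_field]
      simp only [calGH, if_neg (lt_irrefl (0:ℝ)), sub_zero, ← hc_def]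
      split_ifs with hu
      · have he : H + 3/2 = (H + 1/2) + 1 := by ring
        rw [he, Real.rpow_add hu, Real.rpow_one]
        field_simp
      · simp
    have hb : Filter.Tendsto (fun u : ℝ => c * |u| ^ (H + 1/2))
        (nhdsWithin 0 {(0:ℝ)}ᶜ) (nhds 0) := by
      have hcont : ContinuousAt (fun u : ℝ => c * |u| ^ (H + 1/2)) 0 := by
        refine ContinuousAt.mul continuousAt_const ?_
        exact (Real.continuousAt_rpow_const _ _ (Or.inr h12.le)).comp
          continuous_abs.continuousAt
      have := hcont.tendsto
      simp only [abs_zero, Real.zero_rpow (ne_of_gt h12), mul_zero] at this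
      exact this.mono_left nhdsWithin_le_nhds
    refine squeeze_zero' ?_ ?_ hb
    · filter_upwards with u
      rw [hslope]
      split_ifs with hu
      · have := Real.rpow_nonneg hu.le (H + 1/2); positivity
      · exact le_refl 0
    · filter_upwards with u
      rw [hslope]
      split_ifs with hu
      · rw [abs_of_pos hu]
      · have : (0:ℝ) ≤ |u| ^ (H + 1/2) := Real.rpow_nonneg (abs_nonneg u) _
        positivity
  · have hev : calGH H =ᶠ[nhds x] fun y : ℝ => c * y ^ (H + 3/2) := by
      filter_upwards [Ioi_mem_nhds hx] with y hy
      unfold calGH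
      rw [if_pos (mem_Ioi.mp hy), hc_def]
    have hd : HasDerivAt (fun y : ℝ => c * y ^ (H + 3/2))
        (c * ((H + 3/2) * x ^ (H + 3/2 - 1))) x :=
      (Real.hasDerivAt_rpow_const (Or.inl (ne_of_gt hx))).const_mul c
    have hGH : GH H x = c * ((H + 3/2) * x ^ (H + 3/2 - 1)) := by
      simp only [GH, if_pos hx]
      have he : H + 3/2 - 1 = H + 1/2 := by ring
      have key : ((H + 1/2) * (H + 3/2))⁻¹ * (H + 3/2) = (H + 1/2)⁻¹ := by
        field_simp
      rw [he, hc_def, ← key]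
      ring
    rw [hGH]
    exact hd.congr_of_eventuallyEq hev

lemma GH_integral (H : ℝ) (hH : 0 < H) (c a b : ℝ) :
    ∫ u in a..b, GH H (c - u) = calGH H (c - a) - calGH H (c - b) := by
  have hderiv : ∀ u ∈ Set.uIcc a b,
      HasDerivAt (fun v : ℝ => -(calGH H (c - v))) (GH H (c - u)) u := by
    intro u _
    have h1 : HasDerivAt (fun v : ℝ => c - v) (-1) u := by
      simpa using (hasDerivAt_id u).const_sub c
    have := (calGH_hasDerivAt H hH (c - u)).comp u h1
    have h2 := this.neg
    exact h2.congr_deriv (by simp)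
  have hint : IntervalIntegrable (fun u => GH H (c - u)) volume a b := by
    have : Antitone (fun u : ℝ => GH H (c - u)) := fun s u hsu =>
      GH_monotone H hH (by linarith)
    exact this.intervalIntegrable
  have := intervalIntegral.integral_eq_sub_of_hasDerivAt hderiv hint
  rw [this]; ring

lemma GH_ii (H : ℝ) (hH : 0 < H) (c a b : ℝ) :
    IntervalIntegrable (fun u => GH H (c - u)) volume a b := by
  have : Antitone (fun u : ℝ => GH H (c - u)) := fun s u hsu =>
    GH_monotone H hH (by linarith)
  exact this.intervalIntegrable

lemma D2_eq (H t : ℝ) : (fun u : ℝ => Δ2 (GH H) (t - u))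
    = fun u => GH H (t + 2 - u) - 2 * GH H (t + 1 - u) + GH H (t - u) := by
  funext u
  unfold Δ2
  rw [show t - u + 2 = t + 2 - u by ring, show t - u + 1 = t + 1 - u by ring]

lemma D3_eq (H t : ℝ) : (fun u : ℝ => Δ3 (GH H) (t - u - 1))
    = fun u => GH H (t + 2 - u) - 3 * GH H (t + 1 - u) + 3 * GH H (t - u)
        - GH H (t - 1 - u) := by
  funext u
  unfold Δ3
  rw [show t - u - 1 + 3 = t + 2 - u by ring, show t - u - 1 + 2 = t + 1 - u by ring,
    show t - u - 1 + 1 = t - u by ring, show t - u - 1 = t - 1 - u by ring]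

lemma D2_ii (H : ℝ) (hH : 0 < H) (t a b : ℝ) :
    IntervalIntegrable (fun u => Δ2 (GH H) (t - u)) volume a b := by
  rw [D2_eq]
  exact ((GH_ii H hH (t+2) a b).sub ((GH_ii H hH (t+1) a b).const_mul 2)).add
    (GH_ii H hH t a b)

lemma key2 (H : ℝ) (hH : 0 < H) (t a b : ℝ) :
    ∫ u in a..b, Δ2 (GH H) (t - u)
      = (calGH H (t+2-a) - calGH H (t+2-b)) - 2*(calGH H (t+1-a) - calGH H (t+1-b))
        + (calGH H (t-a) - calGH H (t-b)) := by
  rw [D2_eq,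
    intervalIntegral.integral_add
      ((GH_ii H hH (t+2) a b).sub ((GH_ii H hH (t+1) a b).const_mul 2))
      (GH_ii H hH t a b),
    intervalIntegral.integral_sub (GH_ii H hH (t+2) a b)
      ((GH_ii H hH (t+1) a b).const_mul 2),
    intervalIntegral.integral_const_mul,
    GH_integral H hH (t+2) a b, GH_integral H hH (t+1) a b, GH_integral H hH t a b]

lemma key3 (H : ℝ) (hH : 0 < H) (t a b : ℝ) :
    ∫ u in a..b, Δ3 (GH H) (t - u - 1)
      = (calGH H (t+2-a) - calGH H (t+2-b)) - 3*(calGH H (t+1-a) - calGH H (t+1-b))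
        + 3*(calGH H (t-a) - calGH H (t-b)) - (calGH H (t-1-a) - calGH H (t-1-b)) := by
  rw [D3_eq,
    intervalIntegral.integral_sub
      (((GH_ii H hH (t+2) a b).sub ((GH_ii H hH (t+1) a b).const_mul 3)).add
        ((GH_ii H hH t a b).const_mul 3))
      (GH_ii H hH (t-1) a b),
    intervalIntegral.integral_add
      ((GH_ii H hH (t+2) a b).sub ((GH_ii H hH (t+1) a b).const_mul 3))
      ((GH_ii H hH t a b).const_mul 3),
    intervalIntegral.integral_sub (GH_ii H hH (t+2) a b)
      ((GH_ii H hH (t+1) a b).const_mul 3),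
    intervalIntegral.integral_const_mul, intervalIntegral.integral_const_mul,
    GH_integral H hH (t+2) a b, GH_integral H hH (t+1) a b, GH_integral H hH t a b,
    GH_integral H hH (t-1) a b]

theorem statement5 (H : ℝ) (hH : H ∈ Set.Ioc (0:ℝ) (1/2)) (t : ℝ) :
    (∫ u in (0:ℝ)..2, chi (u/2) * Δ2 (GH H) (t - u))
      = -(∫ u in (0:ℝ)..1, Δ3 (GH H) (t - u - 1)) ∧
    -(∫ u in (0:ℝ)..1, Δ3 (GH H) (t - u - 1)) = -(δ4 (calGH H) t) := by
  obtain ⟨hH0, -⟩ := hH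
  have h3 : (∫ u in (0:ℝ)..1, Δ3 (GH H) (t - u - 1)) = δ4 (calGH H) t := by
    rw [key3 H hH0 t 0 1]
    simp only [δ4, show t+2-(0:ℝ) = t+2 by ring, show t+2-(1:ℝ) = t+1 by ring,
      show t+1-(0:ℝ) = t+1 by ring, show t+1-(1:ℝ) = t by ring,
      show t-(0:ℝ) = t by ring, show t-(1:ℝ) = t-1 by ring,
      show t-1-(0:ℝ) = t-1 by ring, show t-1-(1:ℝ) = t-2 by ring]
    ring
  have hI01 : IntervalIntegrable (fun u => chi (u/2) * Δ2 (GH H) (t - u)) volume 0 1 := by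
    refine ((D2_ii H hH0 t 0 1).neg).congr ?_
    rw [Set.uIoc_of_le (by norm_num : (0:ℝ) ≤ 1)]
    intro u hu
    beta_reduce
    have : chi (u/2) = -1 := by
      unfold chi; rw [if_pos (by linarith [hu.2] : u/2 ≤ 1/2)]
    simp [Pi.neg_apply, this]
  have hI12 : IntervalIntegrable (fun u => chi (u/2) * Δ2 (GH H) (t - u)) volume 1 2 := by
    refine (D2_ii H hH0 t 1 2).congr ?_
    rw [Set.uIoc_of_le (by norm_num : (1:ℝ) ≤ 2)]
    intro u hu
    beta_reduce
    have : chi (u/2) = 1 := by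
      unfold chi; rw [if_neg (by push_neg; linarith [hu.1] : ¬ u/2 ≤ 1/2)]
    rw [this]; ring
  have hsplit := intervalIntegral.integral_add_adjacent_intervals hI01 hI12
  have e01 : (∫ u in (0:ℝ)..1, chi (u/2) * Δ2 (GH H) (t - u))
      = ∫ u in (0:ℝ)..1, -Δ2 (GH H) (t - u) := by
    refine intervalIntegral.integral_congr_ae ?_
    rw [Set.uIoc_of_le (by norm_num : (0:ℝ) ≤ 1)]
    filter_upwards with u hu
    have : chi (u/2) = -1 := by
      unfold chi; rw [if_pos (by linarith [hu.2] : u/2 ≤ 1/2)]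
    rw [this]; ring
  have e12 : (∫ u in (1:ℝ)..2, chi (u/2) * Δ2 (GH H) (t - u))
      = ∫ u in (1:ℝ)..2, Δ2 (GH H) (t - u) := by
    refine intervalIntegral.integral_congr_ae ?_
    rw [Set.uIoc_of_le (by norm_num : (1:ℝ) ≤ 2)]
    filter_upwards with u hu
    have : chi (u/2) = 1 := by
      unfold chi; rw [if_neg (by push_neg; linarith [hu.1] : ¬ u/2 ≤ 1/2)]
    rw [this]; ring
  have eneg : (∫ u in (0:ℝ)..1, -Δ2 (GH H) (t - u))
      = -∫ u in (0:ℝ)..1, Δ2 (GH H) (t - u) := by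
    exact intervalIntegral.integral_neg
  refine ⟨?_, by rw [h3]⟩
  rw [← hsplit, e01, e12, eneg, key2 H hH0 t 0 1, key2 H hH0 t 1 2, h3]
  simp only [δ4, show t+2-(0:ℝ) = t+2 by ring, show t+2-(1:ℝ) = t+1 by ring,
    show t+2-(2:ℝ) = t by ring,
    show t+1-(0:ℝ) = t+1 by ring, show t+1-(1:ℝ) = t by ring,
    show t+1-(2:ℝ) = t-1 by ring,
    show t-(0:ℝ) = t by ring, show t-(1:ℝ) = t-1 by ring, show t-(2:ℝ) = t-2 by ring]
  ring
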